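/- arXiv:2108.13076 — 5 statements merged into one kernel-verified Lean document; each statement's English description precedes it below -/
import Mathlib

section
/- For every integer ℓ ≥ 1 and every real ε > 0, the path P_{2ℓ} on 2ℓ vertices has a unit interval representation in which the union of all intervals is contained in an interval of length at most ℓ + ε. -/
open Set

noncomputable section

/-- The closed arc on the circle `AddCircle L` (circle of circumference `L`) whose
tail is `t` and which proceeds clockwise for length `len` (ending at its head
`t + len`). -/
def Arc (L : ℝ) (t : AddCircle L) (len : ℝ) : Set (AddCircle L) :=
  {x : AddCircle L | ∃ s : ℝ, 0 ≤ s ∧ s ≤ len ∧ x = t + (s : AddCircle L)}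

/-- A circular-arc representation of the (finite simple) graph `G` on a circle of
circumference `L`: every vertex `v` gets a closed arc (recorded by its tail and its
length, with `0 ≤ len v < L`), and two arcs of distinct vertices intersect iff the
vertices are adjacent. -/
structure CARep {V : Type*} (G : SimpleGraph V) (L : ℝ) where
  hL : 0 < L
  tail : V → AddCircle L
  len : V → ℝ
  len_nonneg : ∀ v, 0 ≤ len v
  len_lt : ∀ v, len v < L
  inter_iff : ∀ u v : V, u ≠ v →
    ((Arc L (tail u) (len u) ∩ Arc L (tail v) (len v)).Nonempty ↔ G.Adj u v)

namespace CARep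

variable {V : Type*} {G : SimpleGraph V} {L : ℝ}

/-- The arc of vertex `v`. -/
def arc (R : CARep G L) (v : V) : Set (AddCircle L) := Arc L (R.tail v) (R.len v)

/-- The head (clockwise endpoint) of the arc of `v`. -/
def head (R : CARep G L) (v : V) : AddCircle L := R.tail v + ((R.len v : ℝ) : AddCircle L)

/-- A representation is Helly if every nonempty family of pairwise intersecting arcs
has a common point. -/
def Helly (R : CARep G L) : Prop :=
  ∀ S : Set V, S.Nonempty → (∀ u ∈ S, ∀ v ∈ S, (R.arc u ∩ R.arc v).Nonempty) →
    (⋂ v ∈ S, R.arc v).Nonempty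

/-- A representation is normal if the intersection of any two arcs is empty or
connected. -/
def Normal (R : CARep G L) : Prop :=
  ∀ u v : V, u ≠ v → IsPreconnected (R.arc u ∩ R.arc v)

/-- A representation is proper if no arc is properly contained in another. -/
def Proper (R : CARep G L) : Prop := ∀ u v : V, ¬ R.arc u ⊂ R.arc v

/-- A representation is unit if every arc has length exactly one. -/
def IsUnit (R : CARep G L) : Prop := ∀ v, R.len v = 1

end CARep

/-- A partial circular-arc representation of `G`: a circular-arc representation of the
subgraph of `G` induced by the set `pre` of predrawn vertices.  (The fields `tail`/`len`
are total functions; only their values on `pre` are meaningful.) -/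
structure PartialCARep {V : Type*} (G : SimpleGraph V) (L : ℝ) where
  hL : 0 < L
  pre : Set V
  tail : V → AddCircle L
  len : V → ℝ
  len_nonneg : ∀ v ∈ pre, 0 ≤ len v
  len_lt : ∀ v ∈ pre, len v < L
  inter_iff : ∀ u ∈ pre, ∀ v ∈ pre, u ≠ v →
    ((Arc L (tail u) (len u) ∩ Arc L (tail v) (len v)).Nonempty ↔ G.Adj u v)

namespace PartialCARep

variable {V : Type*} {G : SimpleGraph V} {L : ℝ}

/-- The (predrawn) arc of vertex `v`. -/
def arc (R' : PartialCARep G L) (v : V) : Set (AddCircle L) := Arc L (R'.tail v) (R'.len v)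

/-- The head (clockwise endpoint) of the predrawn arc of `v`. -/
def head (R' : PartialCARep G L) (v : V) : AddCircle L :=
  R'.tail v + ((R'.len v : ℝ) : AddCircle L)

/-- The partial representation is Helly. -/
def Helly (R' : PartialCARep G L) : Prop :=
  ∀ S : Set V, S ⊆ R'.pre → S.Nonempty →
    (∀ u ∈ S, ∀ v ∈ S, (R'.arc u ∩ R'.arc v).Nonempty) →
    (⋂ v ∈ S, R'.arc v).Nonempty

/-- The partial representation is normal. -/
def Normal (R' : PartialCARep G L) : Prop :=
  ∀ u ∈ R'.pre, ∀ v ∈ R'.pre, u ≠ v → IsPreconnected (R'.arc u ∩ R'.arc v)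

/-- The partial representation is proper. -/
def Proper (R' : PartialCARep G L) : Prop :=
  ∀ u ∈ R'.pre, ∀ v ∈ R'.pre, ¬ R'.arc u ⊂ R'.arc v

/-- `Pre(C)`: the set of predrawn arcs of vertices of `C`. -/
def PreArcs (R' : PartialCARep G L) (C : Set V) : Set (Set (AddCircle L)) :=
  {A | ∃ v ∈ R'.pre ∩ C, A = R'.arc v}

/-- All predrawn arcs. -/
def AllArcs (R' : PartialCARep G L) : Set (Set (AddCircle L)) :=
  {A | ∃ v ∈ R'.pre, A = R'.arc v}

/-- `Reg⁺(C)`: the intersection of the arcs of `Pre(C)` (the whole circle if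
`Pre(C) = ∅`). -/
def RegPlus (R' : PartialCARep G L) (C : Set V) : Set (AddCircle L) := ⋂₀ R'.PreArcs C

/-- `Reg⁻(C)`: the union of the predrawn arcs not in `Pre(C)`. -/
def RegMinus (R' : PartialCARep G L) (C : Set V) : Set (AddCircle L) :=
  ⋃₀ (R'.AllArcs \ R'.PreArcs C)

/-- The region `Reg(C) = Reg⁺(C) \ Reg⁻(C)`. -/
def Reg (R' : PartialCARep G L) (C : Set V) : Set (AddCircle L) :=
  R'.RegPlus C \ R'.RegMinus C

/-- `J` is a gap of `C`: a connected component of the complement of `Reg(C)`. -/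
def IsGap (R' : PartialCARep G L) (C : Set V) (J : Set (AddCircle L)) : Prop :=
  ∃ x ∈ (R'.Reg C)ᶜ, J = connectedComponentIn (R'.Reg C)ᶜ x

end PartialCARep

/-- `R` extends the partial representation `R'`: predrawn vertices keep their arcs. -/
def CARep.Extends {V : Type*} {G : SimpleGraph V} {L : ℝ}
    (R : CARep G L) (R' : PartialCARep G L) : Prop :=
  ∀ v ∈ R'.pre, R.arc v = R'.arc v

/-- An interval representation of `G`: closed intervals `[lo v, hi v]` on the real
line, intersecting iff the vertices are adjacent. -/
structure IntervalRep {V : Type*} (G : SimpleGraph V) where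
  lo : V → ℝ
  hi : V → ℝ
  lo_le_hi : ∀ v, lo v ≤ hi v
  inter_iff : ∀ u v : V, u ≠ v →
    ((Set.Icc (lo u) (hi u) ∩ Set.Icc (lo v) (hi v)).Nonempty ↔ G.Adj u v)

/-- The interval of vertex `v`. -/
def IntervalRep.itv {V : Type*} {G : SimpleGraph V} (R : IntervalRep G) (v : V) : Set ℝ :=
  Set.Icc (R.lo v) (R.hi v)

/-- `C` is a maximal clique of `G`. -/
def IsMaxClique {V : Type*} (G : SimpleGraph V) (C : Set V) : Prop :=
  G.IsClique C ∧ ∀ D : Set V, G.IsClique D → C ⊆ D → C = D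

/-- The closed neighborhood `N[v]`. -/
def closedNbhd {V : Type*} (G : SimpleGraph V) (v : V) : Set V :=
  insert v {u | G.Adj v u}

/-- `v` is a universal vertex: adjacent to all other vertices. -/
def IsUniversalVertex {V : Type*} (G : SimpleGraph V) (v : V) : Prop :=
  ∀ w, w ≠ v → G.Adj v w

/-- `u, w` form a universal pair: they are adjacent and every vertex is adjacent
to `u` or to `w`. -/
def IsUniversalPair {V : Type*} (G : SimpleGraph V) (u w : V) : Prop :=
  G.Adj u w ∧ ∀ x, G.Adj u x ∨ G.Adj w x

/-- The cyclic interval of length `m` starting at `a` in `ZMod k`. -/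
def ZInterval {k : ℕ} (a : ZMod k) (m : ℕ) : Set (ZMod k) :=
  {x | ∃ i : ℕ, i < m ∧ x = a + (i : ZMod k)}

/-- `T` is consecutive in the cyclic ordering induced by the labelling `f`. -/
def CyclicConsec {α : Type*} {k : ℕ} (f : α → ZMod k) (T : Set α) : Prop :=
  ∃ (a : ZMod k) (m : ℕ), T = f ⁻¹' ZInterval a m

/-- The cyclic position (in `ZMod k`) of an element under the enumeration `e`;
this turns the linear ordering `e` into a cyclic ordering. -/
def zOrd {α : Type*} {k : ℕ} (e : α ≃ Fin k) (x : α) : ZMod k := ((e x : ℕ) : ZMod k)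

/-- Cyclic betweenness in `ZMod k`: starting at `a` and going forward one meets
`b` and then `c` within one revolution. -/
def ZBtw {k : ℕ} (a b c : ZMod k) : Prop :=
  ∃ s t : ℕ, s ≤ t ∧ t < k ∧ b = a + (s : ZMod k) ∧ c = a + (t : ZMod k)

/-- Cyclic betweenness on the circle: starting at `a` and going clockwise one meets
`b` and then `c` within one revolution. -/
def CBtw (L : ℝ) (a b c : AddCircle L) : Prop :=
  ∃ s t : ℝ, 0 ≤ s ∧ s ≤ t ∧ t < L ∧ b = a + (s : AddCircle L) ∧ c = a + (t : AddCircle L)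

/-- The position of the point `x` in the linear order of circle points obtained by
cutting the circle at the point `p`: the unique `s ∈ [0, L)` with `x = p + s`. -/
noncomputable def circPos (L : ℝ) (hL : 0 < L) (p x : AddCircle L) : ℝ :=
  haveI : Fact (0 < L) := ⟨hL⟩
  ((AddCircle.equivIco L 0) (x - p) : ℝ)

/-- Two arcs are in non-normal position: their intersection is nonempty and
disconnected. -/
def NonNormalPos {L : ℝ} (A B : Set (AddCircle L)) : Prop :=
  (A ∩ B).Nonempty ∧ ¬ IsPreconnected (A ∩ B)
/-- For every `ℓ ≥ 1` and `ε > 0`, the path on `2ℓ` vertices has a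
unit interval representation whose union of intervals fits in an interval of length
at most `ℓ + ε`. -/
theorem path_unit_interval_rep_small_span (ℓ : ℕ) (hℓ : 1 ≤ ℓ) (ε : ℝ) (hε : 0 < ε) :
    ∃ (R : IntervalRep (SimpleGraph.pathGraph (2 * ℓ))) (a : ℝ),
      (∀ v, R.hi v = R.lo v + 1) ∧
      (∀ v, R.itv v ⊆ Set.Icc a (a + ((ℓ : ℝ) + ε))) := by
  have hℓR : (1:ℝ) ≤ (ℓ:ℝ) := by exact_mod_cast hℓ
  have hℓ0 : (0:ℝ) < (ℓ:ℝ) := by linarith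
  set δ : ℝ := min (ε / ℓ) 1 with hδdef
  have hδ0 : 0 < δ := lt_min (div_pos hε hℓ0) one_pos
  have hδ1 : δ ≤ 1 := min_le_right _ _
  have hδε : (ℓ:ℝ) * δ ≤ ε := by
    have : δ ≤ ε / ℓ := min_le_left _ _
    calc (ℓ:ℝ) * δ ≤ (ℓ:ℝ) * (ε / ℓ) := by nlinarith
    _ = ε := by field_simp
  set g : ℕ → ℝ := fun i => ((i / 2 : ℕ) : ℝ) * (1 + δ) + ((i % 2 : ℕ) : ℝ) * δ
    with hg
  have hsucc : ∀ i, g (i + 1) = g i + (if i % 2 = 0 then δ else 1) := by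
    intro i
    rcases Nat.even_or_odd i with ⟨k, hk⟩ | ⟨k, hk⟩
    · subst hk
      have h1 : (k + k) / 2 = k := by omega
      have h2 : (k + k + 1) / 2 = k := by omega
      have h3 : (k + k) % 2 = 0 := by omega
      have h4 : (k + k + 1) % 2 = 1 := by omega
      simp [hg, h1, h2, h3, h4]
    · subst hk
      have h1 : (2 * k + 1) / 2 = k := by omega
      have h2 : (2 * k + 1 + 1) / 2 = k + 1 := by omega
      have h3 : (2 * k + 1) % 2 = 1 := by omega
      have h4 : (2 * k + 1 + 1) % 2 = 0 := by omega
      simp [hg, h1, h2, h3, h4]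
      push_cast
      ring
  have hstep : ∀ i, g i ≤ g (i + 1) := by
    intro i
    rw [hsucc i]
    split <;> linarith
  have hmono : Monotone g := monotone_nat_of_le_succ hstep
  have h2 : ∀ i, g (i + 2) = g i + (1 + δ) := by
    intro i
    have h1 : (i + 2) / 2 = i / 2 + 1 := by omega
    have h3 : (i + 2) % 2 = i % 2 := by omega
    simp [hg, h1, h3]
    push_cast
    ring
  have key : ∀ i j : ℕ, i < j → (g j ≤ g i + 1 ↔ j = i + 1) := by
    intro i j hij
    constructor
    · intro h
      by_contra hne
      have hj2 : i + 2 ≤ j := by omega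
      have := hmono hj2
      rw [h2 i] at this
      linarith
    · rintro rfl
      rw [hsucc i]
      split <;> linarith
  refine ⟨⟨fun v => g v.val, fun v => g v.val + 1,
    fun v => le_add_of_nonneg_right zero_le_one, ?_⟩, 0, fun v => rfl, ?_⟩
  · intro u v huv
    rw [Set.Icc_inter_Icc, Set.nonempty_Icc, SimpleGraph.pathGraph_adj]
    have huv' : (u : ℕ) ≠ (v : ℕ) := fun h => huv (Fin.ext h)
    rcases lt_or_gt_of_ne huv' with h | h
    · have h1 : g u.val ≤ g v.val := hmono h.le
      rw [max_eq_right h1, min_eq_left (by linarith), key _ _ h]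
      omega
    · have h1 : g v.val ≤ g u.val := hmono h.le
      rw [max_eq_left h1, min_eq_right (by linarith), key _ _ h]
      omega
  · intro v x hx
    have hx' : x ∈ Set.Icc (g v.val) (g v.val + 1) := hx
    have hv : (v : ℕ) ≤ 2 * ℓ - 1 := by omega
    have hg0 : 0 ≤ g v.val := by
      have : (0:ℝ) ≤ ((v.val / 2 : ℕ) : ℝ) * (1 + δ) := by positivity
      have : (0:ℝ) ≤ ((v.val % 2 : ℕ) : ℝ) * δ := by positivity
      simp only [hg]
      positivity
    have htop : g v.val + 1 ≤ (ℓ:ℝ) + ε := by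
      have h1 : g v.val ≤ g (2 * ℓ - 1) := hmono hv
      have ha : (2 * ℓ - 1) / 2 = ℓ - 1 := by omega
      have hb : (2 * ℓ - 1) % 2 = 1 := by omega
      have hc : ((ℓ - 1 : ℕ) : ℝ) = (ℓ:ℝ) - 1 := by
        have := Nat.cast_sub (R := ℝ) hℓ
        simpa using this
      have h2 : g (2 * ℓ - 1) = ((ℓ:ℝ) - 1) * (1 + δ) + δ := by
        simp [hg, ha, hb, hc]
      rw [h2] at h1
      nlinarith
    simp only [zero_add]
    exact ⟨by linarith [hx'.1], by linarith [hx'.2]⟩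
end
end

section
/- A graph G is a Helly circular-arc graph if and only if there exists a cyclic ordering of its maximal cliques such that for every vertex v, the maximal cliques containing v appear consecutively in that cyclic ordering. -/
open Set

noncomputable section

section HellyAux

open Finset in
/-- small helper: evaluate `n % k` for `n < 2k`. -/
lemma helly_mod2 {k n : ℕ} (h : n < 2 * k) :
    n % k = if n < k then n else n - k := by
  split
  · exact Nat.mod_eq_of_lt ‹_›
  · rw [Nat.mod_eq_sub_mod (le_of_not_gt ‹_›)]
    exact Nat.mod_eq_of_lt (by omega)

lemma helly_mem_zinterval_iff {k : ℕ} (hk : 0 < k) {a i : ℕ} (ha : a < k) (hi : i < k) {m : ℕ}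
    (hm : m ≤ k) : ((i : ZMod k) ∈ ZInterval (a : ZMod k) m) ↔ (i + k - a) % k < m := by
  constructor
  · rintro ⟨j, hj, hx⟩
    have hx' : ((a + j : ℕ) : ZMod k) = ((i : ℕ) : ZMod k) := by push_cast; rw [← hx]
    have hmod : (a + j) % k = i % k := (ZMod.natCast_eq_natCast_iff _ _ _).mp hx'
    rw [helly_mod2 (by omega)] at hmod ⊢
    rw [Nat.mod_eq_of_lt hi] at hmod
    split at hmod <;> split <;> omega
  · intro h
    refine ⟨(i + k - a) % k, h, ?_⟩
    have key : ((a + (i + k - a) % k : ℕ) : ZMod k) = ((i : ℕ) : ZMod k) := by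
      rcases le_or_gt a i with hai | hai
      · have h2 : a + (i + k - a) % k = i := by
          rw [helly_mod2 (by omega)]; split <;> omega
        rw [h2]
      · have h2 : a + (i + k - a) % k = i + k := by
          rw [helly_mod2 (by omega)]; split <;> omega
        rw [h2]; push_cast; simp [ZMod.natCast_self]
    rw [← key]; push_cast; ring

lemma helly_exists_zinterval {k : ℕ} (hk : 0 < k) (P : Fin k → Prop)
    (h : (∀ i j l : Fin k, i ≤ j → j ≤ l → P i → P l → P j) ∨
         (∀ i j l : Fin k, i ≤ j → j ≤ l → ¬P i → ¬P l → ¬P j)) :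
    ∃ (a : ZMod k) (m : ℕ), ∀ i : Fin k, P i ↔ ((i : ℕ) : ZMod k) ∈ ZInterval a m := by
  classical
  by_cases hall : ∀ i, P i
  · refine ⟨0, k, fun i => ⟨fun _ => ⟨(i : ℕ), i.2, by push_cast; ring⟩, fun _ => hall i⟩⟩
  by_cases hnone : ∀ i, ¬ P i
  · exact ⟨0, 0, fun i => ⟨fun hp => absurd hp (hnone i), by rintro ⟨j, hj, _⟩; omega⟩⟩
  push_neg at hall hnone
  rcases h with hconv | hcoconv
  · obtain ⟨i₀, hi₀⟩ := hnone
    have hs : (Finset.univ.filter P).Nonempty := ⟨i₀, by simp [hi₀]⟩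
    set lo := (Finset.univ.filter P).min' hs with hlo
    set hi := (Finset.univ.filter P).max' hs with hhi
    have hPlo : P lo := by have := (Finset.univ.filter P).min'_mem hs; simpa using this
    have hPhi : P hi := by have := (Finset.univ.filter P).max'_mem hs; simpa using this
    have hP : ∀ i, P i ↔ (lo ≤ i ∧ i ≤ hi) := by
      intro i
      constructor
      · intro hp
        exact ⟨Finset.min'_le _ _ (by simp [hp]), Finset.le_max' _ _ (by simp [hp])⟩
      · rintro ⟨h1, h2⟩; exact hconv lo i hi h1 h2 hPlo hPhi
    have hlohi : (lo:ℕ) ≤ (hi:ℕ) := Fin.le_def.mp (Finset.min'_le _ _ (by simp [hPhi]))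
    refine ⟨((lo : ℕ) : ZMod k), (hi : ℕ) - (lo:ℕ) + 1, fun i => ?_⟩
    rw [hP i, helly_mem_zinterval_iff hk lo.2 i.2 (by have := hi.2; omega),
      helly_mod2 (by have := i.2; omega)]
    rw [show (lo ≤ i ∧ i ≤ hi) ↔ ((lo:ℕ) ≤ (i:ℕ) ∧ (i:ℕ) ≤ (hi:ℕ)) from
      and_congr Fin.le_def Fin.le_def]
    have := i.2; have := lo.2; have := hi.2
    split <;> omega
  · obtain ⟨i₀, hi₀⟩ := hall
    have hs : (Finset.univ.filter (fun j => ¬ P j)).Nonempty :=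
      ⟨i₀, Finset.mem_filter.mpr ⟨Finset.mem_univ _, hi₀⟩⟩
    set lo := (Finset.univ.filter (fun j => ¬ P j)).min' hs with hlo
    set hi := (Finset.univ.filter (fun j => ¬ P j)).max' hs with hhi
    have hPlo : ¬ P lo :=
      (Finset.mem_filter.mp ((Finset.univ.filter (fun j => ¬ P j)).min'_mem hs)).2
    have hPhi : ¬ P hi :=
      (Finset.mem_filter.mp ((Finset.univ.filter (fun j => ¬ P j)).max'_mem hs)).2
    have hP : ∀ i, P i ↔ ((i:ℕ) < (lo:ℕ) ∨ (hi:ℕ) < (i:ℕ)) := by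
      intro i
      rcases Classical.em (P i) with hp | hp
      · simp only [hp, true_iff]
        by_contra hc
        push_neg at hc
        exact absurd hp (hcoconv lo i hi (Fin.le_def.mpr (by omega)) (Fin.le_def.mpr (by omega))
          hPlo hPhi)
      · simp only [hp, false_iff]
        push_neg
        have hmem : i ∈ Finset.univ.filter (fun j => ¬ P j) :=
          Finset.mem_filter.mpr ⟨Finset.mem_univ _, hp⟩
        have h1 : lo ≤ i := Finset.min'_le _ _ hmem
        have h2 : i ≤ hi := Finset.le_max' _ _ hmem
        exact ⟨Fin.le_def.mp h1, Fin.le_def.mp h2⟩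
    have hmemhi : hi ∈ Finset.univ.filter (fun j => ¬ P j) :=
      Finset.mem_filter.mpr ⟨Finset.mem_univ _, hPhi⟩
    have hlohi : (lo:ℕ) ≤ (hi:ℕ) := Fin.le_def.mp (Finset.min'_le _ _ hmemhi)
    by_cases hhik : (hi : ℕ) = k - 1
    · refine ⟨((0 : ℕ) : ZMod k), (lo : ℕ), fun i => ?_⟩
      rw [hP i, helly_mem_zinterval_iff hk hk i.2 (le_of_lt lo.2),
        helly_mod2 (by have := i.2; omega)]
      have := i.2; have := lo.2; have := hi.2
      split <;> omega
    · refine ⟨(((hi : ℕ) + 1 : ℕ) : ZMod k), k + (lo:ℕ) - (hi:ℕ) - 1, fun i => ?_⟩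
      rw [hP i, helly_mem_zinterval_iff hk (by have := hi.2; omega) i.2 (by omega),
        helly_mod2 (by have := i.2; omega)]
      have := i.2; have := lo.2; have := hi.2
      split <;> omega

variable {L : ℝ}

lemma helly_circPos_mem (hL : 0 < L) (p x : AddCircle L) : circPos L hL p x ∈ Ico 0 L := by
  haveI : Fact (0 < L) := ⟨hL⟩
  have := ((AddCircle.equivIco L 0) (x - p)).2
  simpa [circPos] using this

lemma helly_coe_circPos (hL : 0 < L) (p x : AddCircle L) :
    ((circPos L hL p x : ℝ) : AddCircle L) = x - p := by
  haveI : Fact (0 < L) := ⟨hL⟩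
  have := (AddCircle.equivIco L 0).symm_apply_apply (x - p)
  rw [← this]; rfl

lemma helly_circPos_coe (hL : 0 < L) (p : AddCircle L) {s : ℝ} (hs : s ∈ Ico 0 L) :
    circPos L hL p (p + (s : AddCircle L)) = s := by
  haveI : Fact (0 < L) := ⟨hL⟩
  have h1 : p + (s : AddCircle L) - p = ((s : ℝ) : AddCircle L) := by abel
  rw [circPos, h1]
  show (QuotientAddGroup.equivIcoMod hL 0 (s:ℝ) : ℝ) = s
  rw [QuotientAddGroup.equivIcoMod_coe]
  exact (toIcoMod_eq_self hL).mpr (by simpa using hs)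

lemma helly_mem_arc_iff (hL : 0 < L) {t : AddCircle L} {l : ℝ} (h0 : 0 ≤ l) (hl : l < L)
    (x : AddCircle L) : x ∈ Arc L t l ↔ circPos L hL t x ≤ l := by
  constructor
  · rintro ⟨s, hs0, hsl, rfl⟩
    rw [helly_circPos_coe hL t ⟨hs0, lt_of_le_of_lt hsl hl⟩]
    exact hsl
  · intro h
    refine ⟨circPos L hL t x, (helly_circPos_mem hL t x).1, h, ?_⟩
    rw [helly_coe_circPos hL t x]; abel

lemma helly_circPos_inj (hL : 0 < L) {p x y : AddCircle L}
    (h : circPos L hL p x = circPos L hL p y) : x = y := by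
  have hx := helly_coe_circPos hL p x
  have hy := helly_coe_circPos hL p y
  rw [h, hy] at hx
  have h2 := congrArg (· + p) hx
  simp only [sub_add_cancel] at h2
  exact h2.symm

lemma helly_circPos_base_change (hL : 0 < L) (p t x : AddCircle L) :
    circPos L hL t x = if circPos L hL p t ≤ circPos L hL p x
      then circPos L hL p x - circPos L hL p t
      else circPos L hL p x - circPos L hL p t + L := by
  have hcoe : (((circPos L hL p x - circPos L hL p t) - circPos L hL t x : ℝ) : AddCircle L)
      = 0 := by
    rw [AddCircle.coe_sub, AddCircle.coe_sub, helly_coe_circPos, helly_coe_circPos,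
      helly_coe_circPos]
    abel
  set q := circPos L hL t x with hq
  set r := circPos L hL p x with hr
  set t₀ := circPos L hL p t with ht
  have hqm := helly_circPos_mem hL t x
  have hrm := helly_circPos_mem hL p x
  have htm := helly_circPos_mem hL p t
  rw [AddCircle.coe_eq_zero_iff] at hcoe
  obtain ⟨n, hn⟩ := hcoe
  rw [zsmul_eq_mul] at hn
  rcases hqm with ⟨hq0, hqL⟩; rcases hrm with ⟨hr0, hrL⟩; rcases htm with ⟨ht0, htL⟩
  have hn0 : n = 0 ∨ n = -1 := by
    have h1 : (n : ℝ) * L < L := by rw [hn]; nlinarith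
    have h2 : -(2 * L) < (n : ℝ) * L := by rw [hn]; nlinarith
    have : (n:ℝ) < 1 := by nlinarith
    have : (-2 : ℝ) < n := by nlinarith
    have : n < 1 := by exact_mod_cast ‹(n:ℝ) < 1›
    have : (-2 : ℤ) < n := by exact_mod_cast ‹(-2:ℝ) < (n:ℝ)›
    omega
  rcases hn0 with rfl | rfl
  · simp only [Int.cast_zero, zero_mul] at hn
    have hqe : q = r - t₀ := by linarith
    rw [if_pos (by linarith), hqe]
  · simp only [Int.cast_neg, Int.cast_one, neg_mul, one_mul] at hn
    have hqe : q = r - t₀ + L := by linarith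
    rw [if_neg (by intro hc; linarith), hqe]

/-- Key combinatorial step: a "cyclic window" along a sorted cyclic ordering is
cyclically consecutive. -/
lemma helly_cyclicConsec_of_window {α : Type*} {k : ℕ} (hk : 0 < k) (e : α ≃ Fin k)
    (g : α → ℝ) (hmono : ∀ i j : Fin k, i ≤ j → g (e.symm i) ≤ g (e.symm j))
    (hL : 0 < L) (h0g : ∀ x, 0 ≤ g x) (hgL : ∀ x, g x < L)
    {t₀ l : ℝ} (ht₀ : 0 ≤ t₀) (htL : t₀ < L) (hl0 : 0 ≤ l) (hlL : l < L)
    (T : Set α)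
    (hT : ∀ x, x ∈ T ↔ (if t₀ ≤ g x then g x - t₀ else g x - t₀ + L) ≤ l) :
    CyclicConsec (zOrd e) T := by
  have hwin : (∀ i j m : Fin k, i ≤ j → j ≤ m →
        e.symm i ∈ T → e.symm m ∈ T → e.symm j ∈ T) ∨
      (∀ i j m : Fin k, i ≤ j → j ≤ m →
        e.symm i ∉ T → e.symm m ∉ T → e.symm j ∉ T) := by
    rcases lt_or_ge (t₀ + l) L with hc | hc
    · left
      have hchar : ∀ x, x ∈ T ↔ (t₀ ≤ g x ∧ g x ≤ t₀ + l) := by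
        intro x
        rw [hT x]
        split_ifs with h
        · constructor
          · intro h2; exact ⟨h, by linarith⟩
          · rintro ⟨_, h2⟩; linarith
        · constructor
          · intro h2; have := h0g x; linarith
          · rintro ⟨h2, _⟩; exact absurd h2 h
      intro i j m hij hjm hi hm
      rw [hchar] at hi hm ⊢
      exact ⟨le_trans hi.1 (hmono i j hij), le_trans (hmono j m hjm) hm.2⟩
    · right
      have hchar : ∀ x, x ∉ T ↔ (t₀ + l - L < g x ∧ g x < t₀) := by
        intro x
        rw [hT x]
        split_ifs with h
        · have := hgL x
          constructor
          · intro h2; exfalso; exact h2 (by linarith)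
          · rintro ⟨_, h2⟩; intro _; linarith
        · push_neg at h
          constructor
          · intro h2; exact ⟨by push_neg at h2; linarith, h⟩
          · rintro ⟨h2, _⟩; intro h3; linarith
      intro i j m hij hjm hi hm
      rw [hchar] at hi hm ⊢
      exact ⟨lt_of_lt_of_le hi.1 (hmono i j hij), lt_of_le_of_lt (hmono j m hjm) hm.2⟩
  obtain ⟨a, m, hiff⟩ := helly_exists_zinterval hk (fun i => e.symm i ∈ T) hwin
  refine ⟨a, m, ?_⟩
  ext x
  have := hiff (e x)
  rw [e.symm_apply_apply] at this
  exact this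

/-- Every clique extends to a maximal clique (finite graphs). -/
lemma helly_exists_maxClique {V : Type*} [Fintype V] (G : SimpleGraph V) {S : Set V}
    (hS : G.IsClique S) : ∃ C : Set V, IsMaxClique G C ∧ S ⊆ C := by
  obtain ⟨C, hC, hmax⟩ := Set.Finite.exists_maximalFor id {D : Set V | G.IsClique D ∧ S ⊆ D}
    (Set.toFinite _) ⟨S, hS, subset_rfl⟩
  refine ⟨C, ⟨hC.1, fun D hD hCD => ?_⟩, hC.2⟩
  exact hCD.antisymm (hmax ⟨hD, hC.2.trans hCD⟩ hCD)

/-- The canonical point on the circle of circumference `k` attached to `z : ZMod k`. -/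
noncomputable def zpt (k : ℕ) (z : ZMod k) : AddCircle (k:ℝ) := ((z.val : ℝ) : AddCircle (k:ℝ))

lemma helly_natcast_circle_mod (k n : ℕ) :
    (((n % k : ℕ) : ℝ) : AddCircle (k:ℝ)) = ((n:ℝ) : AddCircle (k:ℝ)) := by
  rw [eq_comm, ← sub_eq_zero, ← AddCircle.coe_sub, AddCircle.coe_eq_zero_iff]
  refine ⟨(n / k : ℕ), ?_⟩
  have h' : (k:ℝ) * ((n / k : ℕ) : ℝ) + ((n % k : ℕ) : ℝ) = (n:ℝ) := by
    exact_mod_cast congrArg (Nat.cast (R := ℝ)) (Nat.div_add_mod n k)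
  rw [zsmul_eq_mul, Int.cast_natCast]
  linarith

lemma helly_zpt_add_nat (k : ℕ) [NeZero k] (z : ZMod k) (j : ℕ) :
    zpt k (z + (j : ZMod k)) = zpt k z + ((j : ℝ) : AddCircle (k:ℝ)) := by
  have hv : (z + (j : ZMod k)).val = (z.val + j % k) % k := by
    rw [ZMod.val_add, ZMod.val_natCast]
  rw [zpt, zpt, hv, helly_natcast_circle_mod]
  push_cast
  rw [AddCircle.coe_add, helly_natcast_circle_mod]

lemma helly_zpt_inj (k : ℕ) [NeZero k] : Function.Injective (zpt k) := by
  intro z w h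
  have hk : 0 < k := Nat.pos_of_ne_zero (NeZero.ne k)
  haveI : Fact (0 < (k:ℝ)) := ⟨by exact_mod_cast hk⟩
  rw [zpt, zpt, AddCircle.coe_eq_coe_iff_of_mem_Ico
    (a := 0) ⟨by positivity, by rw [zero_add]; exact_mod_cast z.val_lt⟩
    ⟨by positivity, by rw [zero_add]; exact_mod_cast w.val_lt⟩] at h
  have hval : z.val = w.val := by exact_mod_cast h
  calc z = ((z.val : ℕ) : ZMod k) := (ZMod.natCast_rightInverse z).symm
    _ = ((w.val : ℕ) : ZMod k) := by rw [hval]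
    _ = w := ZMod.natCast_rightInverse w

lemma helly_zinterval_norm {k : ℕ} (hk : 0 < k) {a : ZMod k} {m : ℕ} {x : ZMod k}
    (hx : x ∈ ZInterval a m) : ∃ j : ℕ, j < min m k ∧ x = a + (j : ZMod k) := by
  obtain ⟨j, hj, rfl⟩ := hx
  rcases le_or_gt m k with h | h
  · exact ⟨j, by omega, rfl⟩
  · refine ⟨j % k, by have := Nat.mod_lt j hk; omega, ?_⟩
    have : ((j % k : ℕ) : ZMod k) = (j : ZMod k) :=
      (ZMod.natCast_eq_natCast_iff _ _ _).mpr (Nat.mod_modEq j k)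
    rw [this]

lemma helly_mem_arc {L : ℝ} (t : AddCircle L) (l : ℝ) (x : AddCircle L) :
    x ∈ Arc L t l ↔ ∃ s : ℝ, 0 ≤ s ∧ s ≤ l ∧ x = t + (s : AddCircle L) := Iff.rfl

end HellyAux

/-- A graph is a Helly circular-arc graph iff there is a cyclic
ordering of its maximal cliques in which, for every vertex `v`, the maximal cliques
containing `v` are consecutive. -/
theorem helly_CA_iff_cyclic_clique_order {V : Type*} [Fintype V] (G : SimpleGraph V) :
    (∃ (L : ℝ) (R : CARep G L), R.Helly) ↔
    ∃ (k : ℕ) (e : {C : Set V // IsMaxClique G C} ≃ Fin k),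
      ∀ v : V, CyclicConsec (zOrd e) {C : {C : Set V // IsMaxClique G C} | v ∈ C.1} := by
  classical
  constructor
  · rintro ⟨L, R, hH⟩
    have hL := R.hL
    rcases isEmpty_or_nonempty V with hV | hV
    · have hall : ∀ s : Set V, s = ∅ := fun s => Set.eq_empty_of_isEmpty s
      have hmc : IsMaxClique G (∅ : Set V) :=
        ⟨by simp [SimpleGraph.IsClique], fun D _ _ => (hall D).symm⟩
      exact ⟨1, ⟨fun _ => 0, fun _ => ⟨∅, hmc⟩,
        fun C => Subtype.ext (hall C.1).symm, fun i => Subsingleton.elim _ _⟩,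
        fun v => isEmptyElim v⟩
    · obtain ⟨v₀⟩ := hV
      have hclv : ∀ v : V, ∃ C : Set V, IsMaxClique G C ∧ v ∈ C := by
        intro v
        obtain ⟨C, hC, hsub⟩ := helly_exists_maxClique G (Set.pairwise_singleton v G.Adj)
        exact ⟨C, hC, hsub rfl⟩
      haveI : Fintype {C : Set V // IsMaxClique G C} := Fintype.ofFinite _
      haveI : Nonempty {C : Set V // IsMaxClique G C} :=
        ⟨⟨(hclv v₀).choose, (hclv v₀).choose_spec.1⟩⟩
      set k := Fintype.card {C : Set V // IsMaxClique G C} with hkdef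
      have hk : 0 < k := Fintype.card_pos
      have hpex : ∀ C : {C : Set V // IsMaxClique G C}, ∃ x, x ∈ ⋂ v ∈ C.1, R.arc v := by
        intro C
        have hCne : C.1.Nonempty := by
          rcases Set.eq_empty_or_nonempty C.1 with he | hne
          · exfalso
            have h1 : C.1 = {v₀} := C.2.2 {v₀} (Set.pairwise_singleton v₀ G.Adj)
              (by rw [he]; exact Set.empty_subset _)
            rw [he] at h1
            exact absurd h1.symm (Set.singleton_ne_empty v₀)
          · exact hne
        refine hH C.1 hCne ?_
        intro u hu w hw
        rcases eq_or_ne u w with rfl | huw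
        · exact ⟨R.tail u, ⟨0, le_refl 0, R.len_nonneg u, by simp⟩,
            ⟨0, le_refl 0, R.len_nonneg u, by simp⟩⟩
        · exact (R.inter_iff u w huw).mpr (C.2.1 hu hw huw)
      choose p hp using hpex
      have hkey : ∀ (C : {C : Set V // IsMaxClique G C}) (w : V), w ∈ C.1 ↔ p C ∈ R.arc w := by
        intro C w
        constructor
        · intro hw; exact Set.mem_iInter₂.mp (hp C) w hw
        · intro hw
          have hclique : G.IsClique {u | p C ∈ R.arc u} := fun x hx y hy hxy =>
            (R.inter_iff x y hxy).mp ⟨p C, hx, hy⟩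
          have hsub : C.1 ⊆ {u | p C ∈ R.arc u} := fun u hu => Set.mem_iInter₂.mp (hp C) u hu
          have h2 := C.2.2 _ hclique hsub
          rw [show C.1 = {u | p C ∈ R.arc u} from h2]
          exact hw
      have hpinj : Function.Injective p := by
        intro C D h
        apply Subtype.ext; ext w
        rw [show (w ∈ C.1) = (p C ∈ R.arc w) from propext (hkey C w),
          show (w ∈ D.1) = (p D ∈ R.arc w) from propext (hkey D w), h]
      have hρinj : Function.Injective (fun C : {C : Set V // IsMaxClique G C} =>
          circPos L hL 0 (p C)) := fun C D h => hpinj (helly_circPos_inj hL h)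
      set t : Finset ℝ :=
        Finset.univ.image (fun C : {C : Set V // IsMaxClique G C} => circPos L hL 0 (p C))
        with htdef
      have htcard : t.card = k := by
        rw [htdef, Finset.card_image_of_injective _ hρinj, Finset.card_univ]
      let e1 := t.orderIsoOfFin htcard
      have hbij : Function.Bijective (fun C : {C : Set V // IsMaxClique G C} =>
          (⟨circPos L hL 0 (p C), by
            rw [htdef]; exact Finset.mem_image_of_mem _ (Finset.mem_univ C)⟩ : ↥t)) := by
        constructor
        · intro C D h
          apply hρinj
          have h' := congrArg Subtype.val h
          simpa using h'
        · rintro ⟨x, hx⟩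
          rw [htdef, Finset.mem_image] at hx
          obtain ⟨C, _, hC⟩ := hx
          exact ⟨C, Subtype.ext hC⟩
      let e2 := Equiv.ofBijective _ hbij
      let e : {C : Set V // IsMaxClique G C} ≃ Fin k := e2.trans e1.symm.toEquiv
      refine ⟨k, e, fun v => ?_⟩
      have hρsymm : ∀ y : ↥t, circPos L hL 0 (p (e2.symm y)) = (y : ℝ) := by
        intro y
        exact congrArg Subtype.val (e2.apply_symm_apply y)
      have hesymm : ∀ i : Fin k, e.symm i = e2.symm (e1 i) := fun i => rfl
      have hmono : ∀ i j : Fin k, i ≤ j →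
          circPos L hL 0 (p (e.symm i)) ≤ circPos L hL 0 (p (e.symm j)) := by
        intro i j hij
        rw [hesymm, hesymm, hρsymm, hρsymm]
        exact_mod_cast e1.monotone hij
      refine helly_cyclicConsec_of_window hk e
        (fun C => circPos L hL 0 (p C)) hmono hL
        (fun C => (helly_circPos_mem hL 0 (p C)).1) (fun C => (helly_circPos_mem hL 0 (p C)).2)
        (t₀ := circPos L hL 0 (R.tail v)) (l := R.len v)
        (helly_circPos_mem hL 0 (R.tail v)).1 (helly_circPos_mem hL 0 (R.tail v)).2
        (R.len_nonneg v) (R.len_lt v) _ ?_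
      intro C
      rw [Set.mem_setOf_eq, hkey C v]
      rw [show (R.arc v) = Arc L (R.tail v) (R.len v) from rfl,
        helly_mem_arc_iff hL (R.len_nonneg v) (R.len_lt v),
        helly_circPos_base_change hL 0 (R.tail v) (p C)]
  · rintro ⟨k, e, hcc⟩
    haveI hne : Nonempty {C : Set V // IsMaxClique G C} := by
      obtain ⟨C, hC, -⟩ := helly_exists_maxClique G (Set.pairwise_empty G.Adj)
      exact ⟨⟨C, hC⟩⟩
    have hk : 0 < k := (e (Classical.arbitrary _)).pos
    haveI : NeZero k := ⟨hk.ne'⟩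
    set L : ℝ := (k : ℝ) with hLdef
    have hL : 0 < L := by rw [hLdef]; exact_mod_cast hk
    choose a m ham using fun v : V => hcc v
    have hvC : ∀ v : V, ∃ C : {C : Set V // IsMaxClique G C}, v ∈ C.1 := by
      intro v
      obtain ⟨C, hC, hsub⟩ := helly_exists_maxClique G (Set.pairwise_singleton v G.Adj)
      exact ⟨⟨C, hC⟩, hsub rfl⟩
    have hmem : ∀ (v : V) (C : {C : Set V // IsMaxClique G C}),
        v ∈ C.1 ↔ zOrd e C ∈ ZInterval (a v) (m v) := by
      intro v C
      constructor
      · intro h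
        have h2 : C ∈ {C : {C : Set V // IsMaxClique G C} | v ∈ C.1} := h
        rw [ham v] at h2
        exact h2
      · intro h
        have h2 : C ∈ (zOrd e) ⁻¹' ZInterval (a v) (m v) := h
        rw [← ham v] at h2
        exact h2
    have hm1 : ∀ v : V, 1 ≤ min (m v) k := by
      intro v
      obtain ⟨C, hC⟩ := hvC v
      obtain ⟨j, hj, -⟩ := (hmem v C).mp hC
      omega
    have hsurj : ∀ z : ZMod k, ∃ C : {C : Set V // IsMaxClique G C}, zOrd e C = z := by
      intro z
      refine ⟨e.symm ⟨z.val, z.val_lt⟩, ?_⟩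
      show (((e (e.symm ⟨z.val, z.val_lt⟩) : Fin k) : ℕ) : ZMod k) = z
      rw [e.apply_symm_apply]
      exact ZMod.natCast_rightInverse z
    have hlen0 : ∀ v : V, (0:ℝ) ≤ (min (m v) k : ℝ) - 1 := by
      intro v
      have h1 : (1:ℝ) ≤ (min (m v) k : ℝ) := by exact_mod_cast hm1 v
      linarith
    have hlenL : ∀ v : V, (min (m v) k : ℝ) - 1 < L := by
      intro v
      have h1 : (min (m v) k : ℝ) ≤ (k:ℝ) := by exact_mod_cast min_le_right (m v) k
      rw [hLdef]
      linarith
    have harc : ∀ (v : V) (j : ℕ), j < min (m v) k →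
        zpt k (a v + (j : ZMod k)) ∈ Arc L (zpt k (a v)) ((min (m v) k : ℝ) - 1) := by
      intro v j hj
      rw [helly_mem_arc, helly_zpt_add_nat]
      refine ⟨(j : ℝ), by positivity, ?_, rfl⟩
      have h1 : ((j:ℕ) + 1 : ℝ) ≤ (min (m v) k : ℝ) := by exact_mod_cast hj
      linarith
    have hII : ∀ u w : V, u ≠ w →
        ((Arc L (zpt k (a u)) ((min (m u) k : ℝ) - 1) ∩
          Arc L (zpt k (a w)) ((min (m w) k : ℝ) - 1)).Nonempty ↔ G.Adj u w) := by
      intro u w huw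
      constructor
      · rintro ⟨x, hxu, hxw⟩
        rw [helly_mem_arc] at hxu hxw
        obtain ⟨s, hs0, hsM, hxe⟩ := hxu
        obtain ⟨t, ht0, htM, hxe'⟩ := hxw
        have hxx : zpt k (a u) + ((s:ℝ) : AddCircle L) = zpt k (a w) + ((t:ℝ) : AddCircle L) :=
          hxe ▸ hxe'
        have hzero : (((( (a w).val : ℝ) + t) - (((a u).val : ℝ) + s) : ℝ) : AddCircle L) = 0 := by
          rw [AddCircle.coe_sub, AddCircle.coe_add, AddCircle.coe_add]
          rw [show ((((a u).val : ℝ)) : AddCircle L) = zpt k (a u) from rfl,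
            show ((((a w).val : ℝ)) : AddCircle L) = zpt k (a w) from rfl, hxx]
          abel
        rw [AddCircle.coe_eq_zero_iff] at hzero
        obtain ⟨n, hn⟩ := hzero
        rw [zsmul_eq_mul] at hn
        have hst : s - t = (((a w).val : ℝ) - ((a u).val : ℝ) - (n:ℝ) * L) := by linarith
        have hD : s - t = (((((a w).val : ℤ) - ((a u).val : ℤ) - n * (k:ℤ)) : ℤ) : ℝ) := by
          rw [hst, hLdef]
          push_cast
          ring
        set D : ℤ := ((a w).val : ℤ) - ((a u).val : ℤ) - n * (k:ℤ) with hDdef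
        -- common ZMod point
        have hcommon : ∃ z : ZMod k, z ∈ ZInterval (a u) (m u) ∧ z ∈ ZInterval (a w) (m w) := by
          rcases le_or_gt 0 D with hD0 | hD0
          · refine ⟨a u + (D.toNat : ZMod k), ?_, ?_⟩
            · have hsD : ((D.toNat : ℕ) : ℝ) ≤ s := by
                rw [show ((D.toNat : ℕ) : ℝ) = (D : ℝ) by exact_mod_cast Int.toNat_of_nonneg hD0,
                  ← hD]
                linarith
              have hlt : D.toNat < min (m u) k := by
                have h2 : ((D.toNat : ℕ) : ℝ) < (min (m u) k : ℝ) := by linarith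
                exact_mod_cast h2
              exact ⟨D.toNat, lt_of_lt_of_le hlt (min_le_left _ _), rfl⟩
            · have hzz : zpt k (a u + (D.toNat : ZMod k)) = zpt k (a w) := by
                rw [helly_zpt_add_nat]
                rw [show ((D.toNat : ℕ) : ℝ) = s - t by
                  rw [show ((D.toNat : ℕ) : ℝ) = (D : ℝ) from
                    by exact_mod_cast Int.toNat_of_nonneg hD0, ← hD]]
                rw [AddCircle.coe_sub, add_sub, hxx, add_sub_cancel_right]
              have hz2 := helly_zpt_inj k hzz
              rw [hz2]
              exact ⟨0, by have := hm1 w; omega, by simp⟩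
          · refine ⟨a w + ((-D).toNat : ZMod k), ?_, ?_⟩
            · have hzz : zpt k (a w + ((-D).toNat : ZMod k)) = zpt k (a u) := by
                rw [helly_zpt_add_nat]
                rw [show (((-D).toNat : ℕ) : ℝ) = t - s by
                  rw [show (((-D).toNat : ℕ) : ℝ) = ((-D : ℤ) : ℝ) from
                    by exact_mod_cast Int.toNat_of_nonneg (by omega), ]
                  push_cast
                  rw [show (D:ℝ) = s - t from hD.symm]
                  ring]
                rw [AddCircle.coe_sub, add_sub, ← hxx, add_sub_cancel_right]
              have hz2 := helly_zpt_inj k hzz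
              rw [hz2]
              exact ⟨0, by have := hm1 u; omega, by simp⟩
            · have htD : (((-D).toNat : ℕ) : ℝ) ≤ t := by
                rw [show (((-D).toNat : ℕ) : ℝ) = ((-D : ℤ) : ℝ) by
                  exact_mod_cast Int.toNat_of_nonneg (by omega)]
                push_cast
                rw [show (D:ℝ) = s - t from hD.symm]
                linarith
              have hlt : (-D).toNat < min (m w) k := by
                have h2 : (((-D).toNat : ℕ) : ℝ) < (min (m w) k : ℝ) := by linarith
                exact_mod_cast h2
              exact ⟨(-D).toNat, lt_of_lt_of_le hlt (min_le_left _ _), rfl⟩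
        obtain ⟨z, hz1, hz2⟩ := hcommon
        obtain ⟨C, hC⟩ := hsurj z
        have hu : u ∈ C.1 := (hmem u C).mpr (by rw [hC]; exact hz1)
        have hw : w ∈ C.1 := (hmem w C).mpr (by rw [hC]; exact hz2)
        exact C.2.1 hu hw huw
      · intro hadj
        have hpair : G.IsClique {u, w} := by
          intro x hx y hy hxy
          simp only [Set.mem_insert_iff, Set.mem_singleton_iff] at hx hy
          rcases hx with rfl | rfl <;> rcases hy with rfl | rfl
          · exact absurd rfl hxy
          · exact hadj
          · exact hadj.symm
          · exact absurd rfl hxy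
        obtain ⟨C, hC, hsub⟩ := helly_exists_maxClique G hpair
        have hu : u ∈ (⟨C, hC⟩ : {C : Set V // IsMaxClique G C}).1 := hsub (by simp)
        have hw : w ∈ (⟨C, hC⟩ : {C : Set V // IsMaxClique G C}).1 := hsub (by simp)
        obtain ⟨j, hj, hz⟩ := helly_zinterval_norm hk ((hmem u ⟨C, hC⟩).mp hu)
        obtain ⟨j', hj', hz'⟩ := helly_zinterval_norm hk ((hmem w ⟨C, hC⟩).mp hw)
        exact ⟨zpt k (zOrd e ⟨C, hC⟩), by rw [hz]; exact harc u j hj,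
          by rw [hz']; exact harc w j' hj'⟩
    refine ⟨L, ⟨hL, fun v => zpt k (a v), fun v => (min (m v) k : ℝ) - 1,
      hlen0, hlenL, hII⟩, ?_⟩
    intro S hSne hSpair
    have hclique : G.IsClique S := fun x hx y hy hxy => (hII x y hxy).mp (hSpair x hx y hy)
    obtain ⟨C, hC, hsub⟩ := helly_exists_maxClique G hclique
    refine ⟨zpt k (zOrd e ⟨C, hC⟩), ?_⟩
    rw [Set.mem_iInter₂]
    intro v hv
    obtain ⟨j, hj, hz⟩ := helly_zinterval_norm hk ((hmem v ⟨C, hC⟩).mp (hsub hv))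
    show zpt k (zOrd e ⟨C, hC⟩) ∈ Arc L (zpt k (a v)) ((min (m v) k : ℝ) - 1)
    rw [hz]
    exact harc v j hj
end
end

section
/- Let G be a graph with a universal vertex u. Then for every normal Helly circular-arc representation of G there exists a point of the circle that is contained in no arc of the representation. -/
open Set

noncomputable section

namespace CirclePos

variable {L : ℝ} (hL : 0 < L)

theorem circPos_def (p x : AddCircle L) :
    haveI : Fact (0 < L) := ⟨hL⟩
    circPos L hL p x = ((AddCircle.equivIco L 0) (x - p) : ℝ) := rfl

theorem K0 (p x : AddCircle L) : 0 ≤ circPos L hL p x ∧ circPos L hL p x < L := by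
  haveI : Fact (0 < L) := ⟨hL⟩
  rw [circPos_def]
  have h := ((AddCircle.equivIco L 0) (x - p)).2
  exact ⟨h.1, by have := h.2; linarith⟩

theorem K2 (p x : AddCircle L) : p + ((circPos L hL p x : ℝ) : AddCircle L) = x := by
  haveI : Fact (0 < L) := ⟨hL⟩
  have h : ((circPos L hL p x : ℝ) : AddCircle L) = x - p := by
    rw [circPos_def]
    conv_rhs => rw [← (AddCircle.equivIco L 0).symm_apply_apply (x - p)]
    rfl
  rw [h]; abel

theorem K1 (p : AddCircle L) {s : ℝ} (h0 : 0 ≤ s) (h1 : s < L) :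
    circPos L hL p (p + (s : AddCircle L)) = s := by
  haveI : Fact (0 < L) := ⟨hL⟩
  rw [circPos_def]
  have : (p + (s : AddCircle L)) - p = ((s : ℝ) : AddCircle L) := by abel
  rw [this]
  show (toIcoMod (by exact hL) 0 s : ℝ) = s
  exact (toIcoMod_eq_self _).mpr ⟨h0, by rwa [zero_add]⟩


theorem Kval (p x : AddCircle L) {s : ℝ} (h0 : 0 ≤ s) (h1 : s < L)
    (hx : x = p + (s : AddCircle L)) : circPos L hL p x = s := by
  rw [hx]; exact K1 hL p h0 h1

theorem Keq {p x y : AddCircle L} (h : circPos L hL p x = circPos L hL p y) : x = y := by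
  have hx := K2 hL p x
  have hy := K2 hL p y
  rw [h] at hx
  exact hx.symm.trans hy

theorem KeqZero {p x : AddCircle L} (h : circPos L hL p x = 0) : x = p := by
  have hx := K2 hL p x
  rw [h] at hx
  simpa using hx.symm

theorem coeL : ((L : ℝ) : AddCircle L) = 0 := by
  exact_mod_cast AddCircle.coe_period L

theorem mem_arc {t : AddCircle L} {len : ℝ} (h0 : 0 ≤ len) (h1 : len < L) (x : AddCircle L) :
    x ∈ Arc L t len ↔ circPos L hL t x ≤ len := by
  constructor
  · rintro ⟨s, hs0, hs1, rfl⟩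
    rw [K1 hL t hs0 (lt_of_le_of_lt hs1 h1)]
    exact hs1
  · intro h
    exact ⟨circPos L hL t x, (K0 hL t x).1, h, (K2 hL t x).symm⟩

theorem isOpen_band (c : AddCircle L) {r1 r2 : ℝ} (hr1 : 0 ≤ r1) (hr2 : r2 ≤ L) :
    IsOpen {x : AddCircle L | r1 < circPos L hL c x ∧ circPos L hL c x < r2} := by
  have heq : {x : AddCircle L | r1 < circPos L hL c x ∧ circPos L hL c x < r2} =
      (fun y => c + y) '' (((↑) : ℝ → AddCircle L) '' Ioo r1 r2) := by
    ext x
    constructor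
    · rintro ⟨h1, h2⟩
      exact ⟨((circPos L hL c x : ℝ) : AddCircle L), ⟨circPos L hL c x, ⟨h1, h2⟩, rfl⟩,
        K2 hL c x⟩
    · rintro ⟨y, ⟨s, hs, rfl⟩, rfl⟩
      have : circPos L hL c (c + (s : AddCircle L)) = s :=
        K1 hL c (le_trans hr1 hs.1.le) (lt_of_lt_of_le hs.2 hr2)
      rw [mem_setOf_eq, this]
      exact hs
  rw [heq]
  exact (Homeomorph.addLeft c).isOpenMap _
    (QuotientAddGroup.isOpenMap_coe _ isOpen_Ioo)

theorem sep {S : Set (AddCircle L)} (hS : IsPreconnected S) {c1 c2 x1 x2 : AddCircle L}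
    (hc1 : c1 ∉ S) (hc2 : c2 ∉ S) (hx1 : x1 ∈ S) (hx2 : x2 ∈ S)
    (h1 : 0 < circPos L hL c1 x1) (h2 : circPos L hL c1 x1 < circPos L hL c1 c2)
    (h3 : circPos L hL c1 c2 < circPos L hL c1 x2) : False := by
  set m := circPos L hL c1 c2 with hm
  set U := {x : AddCircle L | 0 < circPos L hL c1 x ∧ circPos L hL c1 x < m} with hU
  set W := {x : AddCircle L | m < circPos L hL c1 x ∧ circPos L hL c1 x < L} with hW
  have hUo : IsOpen U := isOpen_band hL c1 le_rfl (le_of_lt (K0 hL c1 c2).2)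
  have hWo : IsOpen W := isOpen_band hL c1 (K0 hL c1 c2).1 le_rfl
  have hcover : S ⊆ U ∪ W := by
    intro x hx
    rcases lt_trichotomy (circPos L hL c1 x) m with h | h | h
    · left
      refine ⟨?_, h⟩
      rcases lt_or_eq_of_le (K0 hL c1 x).1 with h' | h'
      · exact h'
      · exact absurd (KeqZero hL h'.symm) (fun he => hc1 (he ▸ hx))
    · exact absurd (Keq hL h) (fun he => hc2 (he ▸ hx))
    · exact Or.inr ⟨h, (K0 hL c1 x).2⟩
  have hUn : (S ∩ U).Nonempty := ⟨x1, hx1, h1, h2⟩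
  have hWn : (S ∩ W).Nonempty := ⟨x2, hx2, h3, (K0 hL c1 x2).2⟩
  obtain ⟨z, _, hzU, hzW⟩ := hS U W hUo hWo hcover hUn hWn
  exact absurd (lt_trans hzU.2 hzW.1) (lt_irrefl _)

end CirclePos

namespace CirclePos
variable {L : ℝ} (hL : 0 < L)

theorem coe0 : ((0 : ℝ) : AddCircle L) = 0 := by norm_num

theorem Kself (p : AddCircle L) : circPos L hL p p = 0 :=
  Kval hL p p le_rfl hL (by rw [coe0, add_zero])

theorem coe_shift (x s : ℝ) : ((x + s - L : ℝ) : AddCircle L) = ((x + s : ℝ) : AddCircle L) := by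
  have h1 : ((x + s - L : ℝ) : AddCircle L) + ((L : ℝ) : AddCircle L)
      = ((x + s : ℝ) : AddCircle L) := by
    rw [← AddCircle.coe_add]; norm_num
  rw [coeL, add_zero] at h1
  exact h1

theorem Kpt (p : AddCircle L) {x y s : ℝ} (h0 : 0 ≤ s) (h1 : s < L)
    (hy : y = x + s ∨ y = x + s - L) :
    circPos L hL (p + ((x : ℝ) : AddCircle L)) (p + ((y : ℝ) : AddCircle L)) = s := by
  apply Kval hL _ _ h0 h1
  have e : ((y : ℝ) : AddCircle L) = ((x + s : ℝ) : AddCircle L) := by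
    rcases hy with rfl | rfl
    · rfl
    · exact coe_shift x s
  rw [e, AddCircle.coe_add, add_assoc]

end CirclePos

namespace CirclePos
theorem coe_eqL {L : ℝ} {x y : ℝ} (h : y = x + L) :
    ((y : ℝ) : AddCircle L) = ((x : ℝ) : AddCircle L) := by
  subst h
  rw [AddCircle.coe_add, coeL, add_zero]
end CirclePos


/-- If `G` has a universal vertex, then in every normal Helly
circular-arc representation of `G` some point of the circle is contained in no arc. -/
theorem nhca_universal_vertex_free_point {V : Type*} [Fintype V] (G : SimpleGraph V)
    (u : V) (hu : IsUniversalVertex G u)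
    (L : ℝ) (R : CARep G L) (hN : R.Normal) (hH : R.Helly) :
    ∃ p : AddCircle L, ∀ v : V, p ∉ R.arc v := by
  classical
  by_contra hcon
  push_neg at hcon
  have hL : 0 < L := R.hL
  have hl0 : 0 ≤ R.len u := R.len_nonneg u
  have hlL : R.len u < L := R.len_lt u
  set hd : AddCircle L := R.tail u + ((R.len u : ℝ) : AddCircle L) with hhd
  set M : ℝ := L - R.len u with hMdef
  have hM0 : 0 < M := by rw [hMdef]; linarith
  have hML : M ≤ L := by rw [hMdef]; linarith
  have dK0 : ∀ a b : AddCircle L, 0 ≤ circPos L hL a b ∧ circPos L hL a b < L :=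
    CirclePos.K0 hL
  have memv : ∀ (v : V) (x : AddCircle L),
      x ∈ R.arc v ↔ circPos L hL (R.tail v) x ≤ R.len v :=
    fun v x => CirclePos.mem_arc hL (R.len_nonneg v) (R.len_lt v) x
  have tailmem : ∀ v : V, R.tail v ∈ R.arc v := fun v =>
    (memv v _).mpr (by rw [CirclePos.Kself hL]; exact R.len_nonneg v)
  have dpt : ∀ (x y s : ℝ), 0 ≤ s → s < L → (y = x + s ∨ y = x + s - L) →
      circPos L hL (hd + ((x : ℝ) : AddCircle L)) (hd + ((y : ℝ) : AddCircle L)) = s :=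
    fun x y s h0 h1 hy => CirclePos.Kpt hL hd h0 h1 hy
  have fpt : ∀ s : ℝ, 0 ≤ s → s < L →
      circPos L hL hd (hd + ((s : ℝ) : AddCircle L)) = s :=
    fun s h0 h1 => CirclePos.K1 hL hd h0 h1
  have hdpt : ∀ x : AddCircle L, hd + ((circPos L hL hd x : ℝ) : AddCircle L) = x :=
    CirclePos.K2 hL hd
  have htp : hd + ((M : ℝ) : AddCircle L) = R.tail u := by
    rw [hhd, hMdef, add_assoc, ← AddCircle.coe_add]
    rw [show R.len u + (L - R.len u) = L by ring, CirclePos.coeL, add_zero]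
  -- characterization of the arc of u
  have memu : ∀ x : AddCircle L,
      x ∈ R.arc u ↔ (circPos L hL hd x = 0 ∨ M ≤ circPos L hL hd x) := by
    intro x
    rw [memv]
    constructor
    · intro hx
      have hx2 : x = R.tail u + ((circPos L hL (R.tail u) x : ℝ) : AddCircle L) :=
        (CirclePos.K2 hL _ x).symm
      rcases eq_or_lt_of_le hx with he | hlt
      · left
        have hxh : x = hd := by rw [hx2, he, hhd]
        rw [hxh, CirclePos.Kself hL]
      · right
        have hs0 := (dK0 (R.tail u) x).1
        have hx3 : x = hd + ((circPos L hL (R.tail u) x - R.len u + L : ℝ) : AddCircle L) := by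
          rw [hhd, add_assoc, ← AddCircle.coe_add,
            CirclePos.coe_eqL (show R.len u + (circPos L hL (R.tail u) x - R.len u + L)
              = circPos L hL (R.tail u) x + L by ring)]
          exact hx2
        have hval : circPos L hL hd x = circPos L hL (R.tail u) x - R.len u + L := by
          apply CirclePos.Kval hL _ _ (by linarith) (by linarith) hx3
        rw [hval, hMdef]; linarith
    · rintro (h0 | hMle)
      · have hx : x = hd := CirclePos.KeqZero hL h0
        rw [hx, hhd, CirclePos.K1 hL _ hl0 hlL]
      · have hfL := (dK0 hd x).2
        have hf0 := (dK0 hd x).1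
        have hval : circPos L hL (R.tail u) x = R.len u + circPos L hL hd x - L := by
          apply CirclePos.Kval hL _ _ (by rw [hMdef] at hMle; linarith) (by linarith)
          conv_lhs => rw [← hdpt x]
          rw [hhd, add_assoc, ← AddCircle.coe_add,
            CirclePos.coe_eqL (show R.len u + circPos L hL hd x
              = (R.len u + circPos L hL hd x - L) + L by ring)]
        rw [hval]
        linarith
  have hAdj : ∀ v, v ≠ u → (R.arc u ∩ R.arc v).Nonempty :=
    fun v hv => (R.inter_iff u v (Ne.symm hv)).mpr (hu v hv)
  -- extension of an arc past the head of u
  have elh : ∀ (v : V) (s : ℝ), circPos L hL (R.tail v) hd ≤ R.len v → 0 ≤ s →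
      s ≤ R.len v - circPos L hL (R.tail v) hd →
      (hd + ((s : ℝ) : AddCircle L)) ∈ R.arc v := by
    intro v s hD hs0 hs1
    rw [memv]
    have hD0 := (dK0 (R.tail v) hd).1
    have hval : circPos L hL (R.tail v) (hd + ((s : ℝ) : AddCircle L)) =
        circPos L hL (R.tail v) hd + s := by
      apply CirclePos.Kval hL _ _ (by linarith) (by linarith [R.len_lt v])
      conv_lhs => rw [← CirclePos.K2 hL (R.tail v) hd]
      rw [add_assoc, ← AddCircle.coe_add]
    rw [hval]; linarith
  -- distance from tail v to head of u when tail v ≠ head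
  have dth : ∀ v : V, 0 < circPos L hL hd (R.tail v) →
      circPos L hL (R.tail v) hd = L - circPos L hL hd (R.tail v) := by
    intro v ha
    have haL := (dK0 hd (R.tail v)).2
    set a := circPos L hL hd (R.tail v) with hadef
    have htv : R.tail v = hd + ((a : ℝ) : AddCircle L) := (hdpt _).symm
    apply CirclePos.Kval hL _ _ (by linarith) (by linarith)
    rw [htv, add_assoc, ← AddCircle.coe_add,
      CirclePos.coe_eqL (show a + (L - a) = 0 + L by ring), CirclePos.coe0, add_zero]
  -- the coverage lemma
  have CL : ∀ v, v ≠ u → ∀ s : ℝ, 0 < s → s < M →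
      (hd + ((s : ℝ) : AddCircle L)) ∈ R.arc v →
      (circPos L hL (R.tail v) hd ≤ R.len v ∧
        s ≤ R.len v - circPos L hL (R.tail v) hd) ∨
      (0 < circPos L hL hd (R.tail v) ∧ circPos L hL hd (R.tail v) ≤ s ∧
        M - circPos L hL hd (R.tail v) ≤ R.len v) := by
    intro v hvne s hs0 hsM hmem
    rw [memv] at hmem
    have ha0' := (dK0 hd (R.tail v)).1
    have haL' := (dK0 hd (R.tail v)).2
    generalize hadef : circPos L hL hd (R.tail v) = a
    rw [hadef] at ha0' haL'
    have htv : R.tail v = hd + ((a : ℝ) : AddCircle L) := by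
      rw [← hadef]; exact (hdpt _).symm
    rcases eq_or_lt_of_le ha0' with ha | ha
    · left
      have he : R.tail v = hd := by rw [htv, ← ha, CirclePos.coe0, add_zero]
      have h1 : circPos L hL (R.tail v) hd = 0 := by rw [he, CirclePos.Kself hL]
      have h2 : circPos L hL (R.tail v) (hd + ((s : ℝ) : AddCircle L)) = s := by
        rw [he]; exact fpt s hs0.le (by linarith)
      rw [h2] at hmem
      exact ⟨by rw [h1]; exact R.len_nonneg v, by rw [h1]; linarith⟩
    · have hDh : circPos L hL (R.tail v) hd = L - a := by
        rw [← hadef]; exact dth v (by rw [hadef]; exact ha)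
      rcases le_or_gt a s with has | has
      · right
        refine ⟨ha, has, ?_⟩
        obtain ⟨y, hyu, hyv⟩ := hAdj v hvne
        have hyv' := (memv v y).mp hyv
        have hyu' := (memu y).mp hyu
        have hy2 : y = hd + ((circPos L hL hd y : ℝ) : AddCircle L) := (hdpt y).symm
        have hyL := (dK0 hd y).2
        rcases hyu' with hy0 | hyM
        · have hyh : y = hd := CirclePos.KeqZero hL hy0
          rw [hyh, hDh] at hyv'
          linarith
        · have hval : circPos L hL (R.tail v) y = circPos L hL hd y - a := by
            rw [htv]
            conv_lhs => rw [hy2]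
            exact dpt _ _ _ (by linarith) (by linarith) (Or.inl (by ring))
          rw [hval] at hyv'
          linarith
      · refine Or.inl ⟨?_, ?_⟩
        all_goals
          have hds : circPos L hL (R.tail v) (hd + ((s : ℝ) : AddCircle L)) = s - a + L := by
            rw [htv]
            exact dpt _ _ _ (by linarith) (by linarith) (Or.inr (by ring))
        · rw [hDh]; rw [hds] at hmem; linarith
        · rw [hDh]; rw [hds] at hmem; linarith
  -- no arc reaches all the way across the gap
  have C1 : ∀ v0 : V, v0 ≠ u → circPos L hL (R.tail v0) hd ≤ R.len v0 →
      M ≤ R.len v0 - circPos L hL (R.tail v0) hd → False := by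
    intro v0 hne hD hB
    have hD0 := (dK0 (R.tail v0) hd).1
    rcases eq_or_lt_of_le hl0 with hl | hl
    · have : M = L := by rw [hMdef, ← hl]; ring
      have := R.len_lt v0
      linarith
    · have hMLs : M < L := by rw [hMdef]; linarith
      have hhd_mem_u : hd ∈ R.arc u := (memu hd).mpr (Or.inl (CirclePos.Kself hL hd))
      have ht_mem_u : R.tail u ∈ R.arc u := tailmem u
      have ht_mem_v0 : R.tail u ∈ R.arc v0 := by
        rw [← htp]; exact elh v0 M hD hM0.le (by linarith)
      have hhd_mem_v0 : hd ∈ R.arc v0 := by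
        have := elh v0 0 hD le_rfl (by linarith)
        rwa [CirclePos.coe0, add_zero] at this
      have hc1u : (hd + ((M/2 : ℝ) : AddCircle L)) ∉ R.arc u := by
        intro hmem
        rw [memu, fpt (M/2) (by linarith) (by linarith)] at hmem
        rcases hmem with h | h <;> linarith
      obtain ⟨z, hzv0, hfz1, hfz2, hz2⟩ :
          ∃ z : AddCircle L, z ∉ R.arc v0 ∧ M < circPos L hL hd z ∧
            circPos L hL hd z < L ∧ z = hd + ((circPos L hL hd z : ℝ) : AddCircle L) := by
        refine ⟨R.tail v0 + (((R.len v0 + L)/2 : ℝ) : AddCircle L), ?_, ?_, (dK0 hd _).2,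
          (hdpt _).symm⟩
        · intro hmem
          rw [memv, CirclePos.K1 hL _ (by linarith [R.len_nonneg v0])
            (by linarith [R.len_lt v0])] at hmem
          linarith [R.len_lt v0]
        · by_contra hle
          push_neg at hle
          have h0z := (dK0 hd (R.tail v0 + (((R.len v0 + L)/2 : ℝ) : AddCircle L))).1
          have hmem := elh v0 (circPos L hL hd (R.tail v0 + (((R.len v0 + L)/2 : ℝ) : AddCircle L)))
            hD h0z (by linarith)
          rw [hdpt _] at hmem
          rw [memv, CirclePos.K1 hL _ (by linarith [R.len_nonneg v0])
            (by linarith [R.len_lt v0])] at hmem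
          linarith [R.len_lt v0]
      have e1 : circPos L hL (hd + ((M/2 : ℝ) : AddCircle L)) (R.tail u) = M/2 := by
        rw [← htp]
        exact dpt _ _ _ (by linarith) (by linarith) (Or.inl (by ring))
      have e2 : circPos L hL (hd + ((M/2 : ℝ) : AddCircle L)) z =
          circPos L hL hd z - M/2 := by
        conv_lhs => rw [hz2]
        exact dpt _ _ _ (by linarith) (by linarith) (Or.inl (by ring))
      have e3 : circPos L hL (hd + ((M/2 : ℝ) : AddCircle L)) hd = L - M/2 := by
        have := dpt (M/2) 0 (L - M/2) (by linarith) (by linarith) (Or.inr (by ring))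
        rwa [CirclePos.coe0, add_zero] at this
      refine CirclePos.sep hL (hN u v0 (fun he => hne he.symm))
        (fun hc => hc1u hc.1) (fun hc => hzv0 hc.2)
        ⟨ht_mem_u, ht_mem_v0⟩ ⟨hhd_mem_u, hhd_mem_v0⟩ ?_ ?_ ?_
      · rw [e1]; linarith
      · rw [e1, e2]; linarith
      · rw [e2, e3]; linarith
  -- the circle is covered
  have cover : ∀ s : ℝ, 0 < s → s < M →
      ∃ v, v ≠ u ∧ (hd + ((s : ℝ) : AddCircle L)) ∈ R.arc v := by
    intro s h0 h1
    obtain ⟨v, hv⟩ := hcon (hd + ((s : ℝ) : AddCircle L))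
    refine ⟨v, ?_, hv⟩
    rintro rfl
    rw [memu, fpt s h0.le (by linarith)] at hv
    rcases hv with h | h <;> linarith
  by_cases hT : ∃ v1, v1 ≠ u ∧ 0 < circPos L hL hd (R.tail v1) ∧
      circPos L hL hd (R.tail v1) < M ∧ M - circPos L hL hd (R.tail v1) ≤ R.len v1
  case neg =>
    have hQ : ∀ s : ℝ, 0 < s → s < M → ∃ v, (v ≠ u ∧ circPos L hL (R.tail v) hd ≤ R.len v) ∧
        s ≤ R.len v - circPos L hL (R.tail v) hd := by
      intro s h0 h1
      obtain ⟨v, hv, hmem⟩ := cover s h0 h1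
      rcases CL v hv s h0 h1 hmem with ⟨h2, h3⟩ | ⟨h2, h3, h4⟩
      · exact ⟨v, ⟨hv, h2⟩, h3⟩
      · exact absurd ⟨v, hv, h2, by linarith, h4⟩ hT
    obtain ⟨w, hw⟩ := hQ (M/2) (by linarith) (by linarith)
    have hFne : (Finset.univ.filter
        (fun v : V => v ≠ u ∧ circPos L hL (R.tail v) hd ≤ R.len v)).Nonempty :=
      ⟨w, by simp only [Finset.mem_filter, Finset.mem_univ, true_and]; exact hw.1⟩
    obtain ⟨v0, hv0F, hv0max⟩ := Finset.exists_max_image _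
      (fun v => R.len v - circPos L hL (R.tail v) hd) hFne
    simp only [Finset.mem_filter, Finset.mem_univ, true_and] at hv0F
    have hBall : ∀ s, 0 < s → s < M → s ≤ R.len v0 - circPos L hL (R.tail v0) hd := by
      intro s h0 h1
      obtain ⟨v, hvF, hs⟩ := hQ s h0 h1
      have := hv0max v (by simp only [Finset.mem_filter, Finset.mem_univ, true_and]; exact hvF)
      linarith
    have hB : M ≤ R.len v0 - circPos L hL (R.tail v0) hd := by
      by_contra hc
      push_neg at hc
      have h2 := hBall (M/2) (by linarith) (by linarith)
      have h3 := hBall ((R.len v0 - circPos L hL (R.tail v0) hd + M)/2)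
        (by linarith) (by linarith)
      linarith
    exact C1 v0 hv0F.1 hv0F.2 hB
  case pos =>
    obtain ⟨w1, hw1⟩ := hT
    have hF1ne : (Finset.univ.filter (fun v : V => v ≠ u ∧ 0 < circPos L hL hd (R.tail v) ∧
        circPos L hL hd (R.tail v) < M ∧ M - circPos L hL hd (R.tail v) ≤ R.len v)).Nonempty :=
      ⟨w1, by simp only [Finset.mem_filter, Finset.mem_univ, true_and]; exact hw1⟩
    obtain ⟨v1, hv1F, hv1min⟩ := Finset.exists_min_image _
      (fun v => circPos L hL hd (R.tail v)) hF1ne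
    simp only [Finset.mem_filter, Finset.mem_univ, true_and] at hv1F
    obtain ⟨hv1ne, hA0, hAM, hl1⟩ := hv1F
    obtain ⟨A, hAdef⟩ : ∃ A, circPos L hL hd (R.tail v1) = A := ⟨_, rfl⟩
    rw [hAdef] at hA0 hAM hl1
    have htv1 : R.tail v1 = hd + ((A : ℝ) : AddCircle L) := by
      rw [← hAdef]; exact (hdpt _).symm
    have haL1 : A < L := hAdef ▸ (dK0 hd (R.tail v1)).2
    have hdthv1 : circPos L hL (R.tail v1) hd = L - A := by
      rw [← hAdef]; exact dth v1 (by rw [hAdef]; exact hA0)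
    have hQ' : ∀ s : ℝ, 0 < s → s < A →
        ∃ v, (v ≠ u ∧ circPos L hL (R.tail v) hd ≤ R.len v) ∧
        s ≤ R.len v - circPos L hL (R.tail v) hd := by
      intro s h0 h1
      obtain ⟨v, hv, hmem⟩ := cover s h0 (by linarith)
      rcases CL v hv s h0 (by linarith) hmem with ⟨h2, h3⟩ | ⟨h2, h3, h4⟩
      · exact ⟨v, ⟨hv, h2⟩, h3⟩
      · exfalso
        have hmin := hv1min v (by
          simp only [Finset.mem_filter, Finset.mem_univ, true_and]
          exact ⟨hv, h2, by linarith, h4⟩)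
        linarith [hAdef]
    obtain ⟨w, hw⟩ := hQ' (A / 2) (by linarith) (by linarith)
    have hFne : (Finset.univ.filter
        (fun v : V => v ≠ u ∧ circPos L hL (R.tail v) hd ≤ R.len v)).Nonempty :=
      ⟨w, by simp only [Finset.mem_filter, Finset.mem_univ, true_and]; exact hw.1⟩
    obtain ⟨v0, hv0F, hv0max⟩ := Finset.exists_max_image _
      (fun v => R.len v - circPos L hL (R.tail v) hd) hFne
    simp only [Finset.mem_filter, Finset.mem_univ, true_and] at hv0F
    have hBall : ∀ s, 0 < s → s < A → s ≤ R.len v0 - circPos L hL (R.tail v0) hd := by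
      intro s h0 h1
      obtain ⟨v, hvF, hs⟩ := hQ' s h0 h1
      have := hv0max v (by simp only [Finset.mem_filter, Finset.mem_univ, true_and]; exact hvF)
      linarith
    have hB : A ≤ R.len v0 - circPos L hL (R.tail v0) hd := by
      by_contra hc
      push_neg at hc
      have h2 := hBall (A / 2) (by linarith) (by linarith)
      have h3 := hBall ((R.len v0 - circPos L hL (R.tail v0) hd + A)/2)
        (by linarith) (by linarith)
      linarith
    have hne01 : R.tail v0 ≠ R.tail v1 := by
      intro he
      have hae : circPos L hL hd (R.tail v0) = A := by rw [he, hAdef]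
      have hD : circPos L hL (R.tail v0) hd = L - A := by
        rw [← hae]; exact dth v0 (by rw [hae]; exact hA0)
      rw [hD] at hB
      linarith [R.len_lt v0]
    have hvne01 : v0 ≠ v1 := fun he => hne01 (by rw [he])
    have hpv1 : R.tail v1 ∈ R.arc v1 := tailmem v1
    have hpv0 : R.tail v1 ∈ R.arc v0 := by
      rw [htv1]; exact elh v0 _ hv0F.2 (le_of_lt hA0) hB
    -- Helly point
    obtain ⟨q, hq⟩ := hH {u, v0, v1} ⟨u, by simp⟩ (by
      intro a ha b hb
      simp only [Set.mem_insert_iff, Set.mem_singleton_iff] at ha hb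
      have symm_inter : ∀ {A B : Set (AddCircle L)}, (A ∩ B).Nonempty → (B ∩ A).Nonempty :=
        fun ⟨x, h1, h2⟩ => ⟨x, h2, h1⟩
      have huv0 : (R.arc u ∩ R.arc v0).Nonempty := hAdj v0 hv0F.1
      have huv1 : (R.arc u ∩ R.arc v1).Nonempty := hAdj v1 hv1ne
      have hv0v1 : (R.arc v0 ∩ R.arc v1).Nonempty := ⟨R.tail v1, hpv0, hpv1⟩
      have hself : ∀ x : V, (R.arc x ∩ R.arc x).Nonempty :=
        fun x => ⟨R.tail x, tailmem x, tailmem x⟩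
      rcases ha with rfl | rfl | rfl <;> rcases hb with rfl | rfl | rfl <;>
        first
          | exact hself _
          | exact huv0
          | exact huv1
          | exact hv0v1
          | exact symm_inter huv0
          | exact symm_inter huv1
          | exact symm_inter hv0v1)
    have hqu : q ∈ R.arc u := Set.mem_iInter₂.mp hq u (by simp)
    have hqv0 : q ∈ R.arc v0 := Set.mem_iInter₂.mp hq v0 (by simp)
    have hqv1 : q ∈ R.arc v1 := Set.mem_iInter₂.mp hq v1 (by simp)
    have hq2 : q = hd + ((circPos L hL hd q : ℝ) : AddCircle L) := (hdpt q).symm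
    have hfq := (memu q).mp hqu
    have hfqL := (dK0 hd q).2
    have hfq0 := (dK0 hd q).1
    rcases le_or_gt (L - A) (R.len v1) with hca | hcb
    · -- case (a) : the arc of v1 wraps past the head of u
      have hhd_v1 : hd ∈ R.arc v1 := by
        rw [memv, hdthv1]; exact hca
      have hhd_v0 : hd ∈ R.arc v0 := by
        have := elh v0 0 hv0F.2 le_rfl (by linarith)
        rwa [CirclePos.coe0, add_zero] at this
      obtain ⟨ga, hgadef⟩ : ∃ x : ℝ, x = (A + R.len v1 - L + A)/2 := ⟨_, rfl⟩
      have hga1 : A + R.len v1 - L < ga := by rw [hgadef]; linarith [R.len_lt v1]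
      have hga2 : ga < A := by rw [hgadef]; linarith [R.len_lt v1]
      have hga0 : 0 < ga := by rw [hgadef]; linarith
      have hcav1 : (hd + ((ga : ℝ) : AddCircle L)) ∉ R.arc v1 := by
        intro hmem
        rw [memv, htv1] at hmem
        rw [dpt _ _ (ga - A + L) (by linarith) (by linarith) (Or.inr (by ring))] at hmem
        linarith
      obtain ⟨gb, hgb1, hgbL, hgbnb⟩ : ∃ gb : ℝ,
          (R.len v0 - circPos L hL (R.tail v0) hd) < gb ∧ gb < L ∧
          (hd + ((gb : ℝ) : AddCircle L)) ∉ R.arc v0 := by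
        rcases eq_or_lt_of_le (dK0 hd (R.tail v0)).1 with h0 | h0
        · have he : R.tail v0 = hd := CirclePos.KeqZero hL h0.symm
          have hD00 : circPos L hL (R.tail v0) hd = 0 := by rw [he, CirclePos.Kself hL]
          refine ⟨(R.len v0 + L)/2, ?_, by linarith [R.len_lt v0], ?_⟩
          · rw [hD00]; linarith [R.len_lt v0]
          · intro hmem
            rw [memv, he, fpt _ (by linarith [R.len_nonneg v0]) (by linarith [R.len_lt v0])]
              at hmem
            linarith [R.len_lt v0]
        · have hD0 := dth v0 h0
          have haL0 := (dK0 hd (R.tail v0)).2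
          have htv0 : R.tail v0 = hd + ((circPos L hL hd (R.tail v0) : ℝ) : AddCircle L) :=
            (hdpt _).symm
          obtain ⟨a0, ha0def⟩ : ∃ a0, circPos L hL hd (R.tail v0) = a0 := ⟨_, rfl⟩
          rw [ha0def] at h0 hD0 haL0 htv0
          refine ⟨(R.len v0 - (L - a0) + a0)/2, ?_, by linarith [R.len_lt v0], ?_⟩
          · rw [hD0]; linarith [R.len_lt v0]
          · intro hmem
            rw [memv, htv0] at hmem
            rw [dpt _ _ ((R.len v0 - (L - a0) + a0)/2 - a0 + L)
              (by linarith [R.len_lt v0]) (by linarith [R.len_lt v0, R.len_nonneg v0])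
              (Or.inr (by ring))] at hmem
            rw [hD0] at hB
            linarith [R.len_lt v0]
      have e1 : circPos L hL (hd + ((ga : ℝ) : AddCircle L)) (R.tail v1) = A - ga := by
        rw [htv1]
        exact dpt _ _ _ (by linarith) (by linarith) (Or.inl (by ring))
      have e2 : circPos L hL (hd + ((ga : ℝ) : AddCircle L))
          (hd + ((gb : ℝ) : AddCircle L)) = gb - ga := by
        exact dpt _ _ _ (by linarith) (by linarith) (Or.inl (by ring))
      have e3 : circPos L hL (hd + ((ga : ℝ) : AddCircle L)) hd = L - ga := by
        have := dpt ga 0 (L - ga) (by linarith) (by linarith) (Or.inr (by ring))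
        rwa [CirclePos.coe0, add_zero] at this
      refine CirclePos.sep hL (hN v0 v1 hvne01)
        (fun hc => hcav1 hc.2) (fun hc => hgbnb hc.1)
        ⟨hpv0, hpv1⟩ ⟨hhd_v0, hhd_v1⟩ ?_ ?_ ?_
      · rw [e1]; linarith
      · rw [e1, e2]; linarith
      · rw [e2, e3]; linarith
    · -- case (b) : the arc of v1 does not wrap
      have hfqM : M ≤ circPos L hL hd q := by
        rcases hfq with h0 | hM'
        · exfalso
          have hqh : q = hd := CirclePos.KeqZero hL h0
          have hthis := (memv v1 q).mp hqv1
          rw [hqh, hdthv1] at hthis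
          linarith
        · exact hM'
      rcases le_or_gt M (R.len v0 - circPos L hL (R.tail v0) hd) with hb1' | hb2'
      · exact C1 v0 hv0F.1 hv0F.2 hb1'
      · have ha00 : 0 < circPos L hL hd (R.tail v0) := by
          rcases eq_or_lt_of_le (dK0 hd (R.tail v0)).1 with h0 | h0
          · exfalso
            have he : R.tail v0 = hd := CirclePos.KeqZero hL h0.symm
            have hD00 : circPos L hL (R.tail v0) hd = 0 := by rw [he, CirclePos.Kself hL]
            have hq0 := (memv v0 q).mp hqv0
            rw [he] at hq0
            rw [hD00] at hb2'
            linarith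
          · exact h0
        have hD0 := dth v0 ha00
        have haL0 := (dK0 hd (R.tail v0)).2
        have htv0 : R.tail v0 = hd + ((circPos L hL hd (R.tail v0) : ℝ) : AddCircle L) :=
          (hdpt _).symm
        obtain ⟨a0, ha0def⟩ : ∃ a0, circPos L hL hd (R.tail v0) = a0 := ⟨_, rfl⟩
        rw [ha0def] at ha00 hD0 haL0 htv0
        rw [hD0] at hb2' hB
        obtain ⟨fq, hfqdef⟩ : ∃ x, circPos L hL hd q = x := ⟨_, rfl⟩
        rw [hfqdef] at hfqM hfqL hfq0
        rw [hfqdef] at hq2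
        have ha0fq : a0 ≤ fq := by
          by_contra hlt
          push_neg at hlt
          have hq0 := (memv v0 q).mp hqv0
          rw [htv0] at hq0
          conv at hq0 => rw [hq2]
          rw [dpt _ _ (fq - a0 + L) (by linarith) (by linarith)
            (Or.inr (by ring))] at hq0
          linarith
        have hfqE : fq ≤ A + R.len v1 := by
          have hq1 := (memv v1 q).mp hqv1
          rw [htv1] at hq1
          conv at hq1 => rw [hq2]
          rw [dpt _ _ (fq - A) (by linarith) (by linarith)
            (Or.inl (by ring))] at hq1
          linarith
        have hEL : A + R.len v1 < L := by linarith
        obtain ⟨ga, hgadef⟩ : ∃ x : ℝ, x = (A + R.len v1 + L)/2 := ⟨_, rfl⟩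
        have hgaE : A + R.len v1 < ga := by rw [hgadef]; linarith
        have hgaL : ga < L := by rw [hgadef]; linarith
        obtain ⟨gb, hgbdef⟩ : ∃ x : ℝ, x = (R.len v0 - (L - a0) + a0)/2 := ⟨_, rfl⟩
        have hgb1 : R.len v0 - (L - a0) < gb := by rw [hgbdef]; linarith [R.len_lt v0]
        have hgb2 : gb < a0 := by rw [hgbdef]; linarith [R.len_lt v0]
        have hgb0 : 0 < gb := by linarith
        have hgafq : fq < ga := by linarith
        have hgav1 : (hd + ((ga : ℝ) : AddCircle L)) ∉ R.arc v1 := by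
          intro hmem
          rw [memv, htv1] at hmem
          rw [dpt _ _ (ga - A) (by linarith) (by linarith) (Or.inl (by ring))] at hmem
          linarith
        have hgbv0 : (hd + ((gb : ℝ) : AddCircle L)) ∉ R.arc v0 := by
          intro hmem
          rw [memv, htv0] at hmem
          rw [dpt _ _ (gb - a0 + L) (by linarith) (by linarith) (Or.inr (by ring))] at hmem
          linarith
        have e1 : circPos L hL (hd + ((ga : ℝ) : AddCircle L)) (R.tail v1) = A - ga + L := by
          rw [htv1]
          exact dpt _ _ _ (by linarith) (by linarith) (Or.inr (by ring))
        have e2 : circPos L hL (hd + ((ga : ℝ) : AddCircle L))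
            (hd + ((gb : ℝ) : AddCircle L)) = gb - ga + L := by
          exact dpt _ _ _ (by linarith) (by linarith) (Or.inr (by ring))
        have e3 : circPos L hL (hd + ((ga : ℝ) : AddCircle L)) q = fq - ga + L := by
          conv_lhs => rw [hq2]
          exact dpt _ _ _ (by linarith) (by linarith) (Or.inr (by ring))
        refine CirclePos.sep hL (hN v0 v1 hvne01)
          (fun hc => hgav1 hc.2) (fun hc => hgbv0 hc.1)
          ⟨hpv0, hpv1⟩ ⟨hqv0, hqv1⟩ ?_ ?_ ?_
        · rw [e1]; linarith
        · rw [e1, e2]; linarith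
        · rw [e2, e3]; linarith
end
end

section
/- Let R' be a partial circular-arc representation of a graph G. For any two maximal cliques C and D of G, either Reg(C) ∩ Reg(D) = ∅ or Reg(C) = Reg(D). -/
open Set

noncomputable section

/-- For any two maximal cliques `C`, `D` the regions `Reg(C)` and
`Reg(D)` are either disjoint or equal. -/
theorem region_disjoint_or_equal {V : Type*} [Fintype V] (G : SimpleGraph V)
    (L : ℝ) (R' : PartialCARep G L) (C D : Set V)
    (hC : IsMaxClique G C) (hD : IsMaxClique G D) :
    R'.Reg C ∩ R'.Reg D = ∅ ∨ R'.Reg C = R'.Reg D := by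
  by_cases h : R'.PreArcs C = R'.PreArcs D
  · right
    unfold PartialCARep.Reg PartialCARep.RegPlus PartialCARep.RegMinus
    rw [h]
  · left
    have key : ∀ (X Y : Set V), ∀ A, A ∈ R'.PreArcs X → A ∉ R'.PreArcs Y →
        R'.Reg X ∩ R'.Reg Y = ∅ := by
      intro X Y A hAX hAY
      have hAall : A ∈ R'.AllArcs := by
        obtain ⟨v, hv, rfl⟩ := hAX
        exact ⟨v, hv.1, rfl⟩
      ext x
      simp only [Set.mem_inter_iff, Set.mem_empty_iff_false, iff_false, not_and]
      intro hxX hxY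
      have hxA : x ∈ A := hxX.1 A hAX
      exact hxY.2 ⟨A, ⟨hAall, hAY⟩, hxA⟩
    by_cases hsub : R'.PreArcs C ⊆ R'.PreArcs D
    · rcases Set.not_subset.mp (fun hsub' => h (Set.Subset.antisymm hsub hsub'))
        with ⟨A, hA1, hA2⟩
      rw [Set.inter_comm]
      exact key D C A hA1 hA2
    · rcases Set.not_subset.mp hsub with ⟨A, hA1, hA2⟩
      exact key C D A hA1 hA2
end
end

section
/- Let R' be a partial circular-arc representation of a graph G such that Reg(E) ≠ ∅ for every maximal clique E of G. If C and D are maximal cliques of G with Pre(C) ≠ Pre(D), then there exists a gap J of D with Reg(C) ⊆ J. -/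
open Set

noncomputable section

section Aux

private lemma arc_preconnected (L : ℝ) (t : AddCircle L) (len : ℝ) :
    IsPreconnected (Arc L t len) := by
  have himg : Arc L t len = (fun s : ℝ => t + (s : AddCircle L)) '' Set.Icc 0 len := by
    ext x
    constructor
    · rintro ⟨s, h0, h1, rfl⟩; exact ⟨s, ⟨h0, h1⟩, rfl⟩
    · rintro ⟨s, ⟨h0, h1⟩, rfl⟩; exact ⟨s, h0, h1, rfl⟩
  rw [himg]
  exact (isPreconnected_Icc).image _
    (continuous_const.add (AddCircle.continuous_mk' L)).continuousOn

private lemma mem_arc_pos {L : ℝ} (hL : 0 < L) {t : AddCircle L} {len : ℝ}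
    (h0 : 0 ≤ len) (hlt : len < L) {x : AddCircle L} (hx : x ∉ Arc L t len) :
    ∃ s : ℝ, len < s ∧ s < L ∧ x = t + (s : AddCircle L) := by
  haveI : Fact (0 < L) := ⟨hL⟩
  set u : ℝ := ((AddCircle.equivIco L 0) (x - t) : ℝ) with hu
  have hmem : u ∈ Set.Ico (0:ℝ) (0 + L) := ((AddCircle.equivIco L 0) (x - t)).2
  have hxe : x = t + (u : AddCircle L) := by
    have : ((u : ℝ) : AddCircle L) = x - t := (AddCircle.equivIco L 0).symm_apply_apply (x - t)
    rw [this]; abel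
  refine ⟨u, ?_, by simpa using hmem.2, hxe⟩
  by_contra hle
  push_neg at hle
  exact hx ⟨u, hmem.1, hle, hxe⟩

private lemma compl_arc_preconnected {L : ℝ} (hL : 0 < L) (t : AddCircle L) {len : ℝ}
    (h0 : 0 ≤ len) (hlt : len < L) :
    IsPreconnected (Arc L t len)ᶜ := by
  haveI : Fact (0 < L) := ⟨hL⟩
  have himg : (Arc L t len)ᶜ = (fun s : ℝ => t + (s : AddCircle L)) '' Set.Ioo len L := by
    ext x
    constructor
    · intro hx
      obtain ⟨s, h1, h2, rfl⟩ := mem_arc_pos hL h0 hlt hx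
      exact ⟨s, ⟨h1, h2⟩, rfl⟩
    · rintro ⟨s, ⟨h1, h2⟩, rfl⟩
      rintro ⟨u, hu0, hu1, he⟩
      have hsu : (s : AddCircle L) = (u : AddCircle L) := by
        have := he; exact add_left_cancel this
      have : s = u := by
        rw [AddCircle.coe_eq_coe_iff_of_mem_Ico
          (a := (0:ℝ)) (⟨le_of_lt (lt_of_le_of_lt h0 h1), by simpa using h2⟩)
          ⟨hu0, by simpa using lt_of_le_of_lt hu1 hlt⟩] at hsu
        exact hsu
      linarith
  rw [himg]
  exact (isPreconnected_Ioo).image _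
    (continuous_const.add (AddCircle.continuous_mk' L)).continuousOn

end Aux

/-- If all regions of maximal cliques are nonempty and `C`, `D` are
maximal cliques with `Pre(C) ≠ Pre(D)`, then `D` has a gap containing `Reg(C)`. -/
theorem region_in_single_gap {V : Type*} [Fintype V] (G : SimpleGraph V)
    (L : ℝ) (R' : PartialCARep G L)
    (hreg : ∀ E : Set V, IsMaxClique G E → (R'.Reg E).Nonempty)
    (C D : Set V) (hC : IsMaxClique G C) (hD : IsMaxClique G D)
    (hne : R'.PreArcs C ≠ R'.PreArcs D) :
    ∃ J : Set (AddCircle L), R'.IsGap D J ∧ R'.Reg C ⊆ J := by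
  obtain ⟨x, hx⟩ := hreg C hC
  have hxC : x ∈ R'.Reg C := hx
  have hsd : (symmDiff (R'.PreArcs C) (R'.PreArcs D)).Nonempty := symmDiff_nonempty.mpr hne
  obtain ⟨A, hA⟩ := hsd
  rw [Set.mem_symmDiff] at hA
  -- In both cases we find a preconnected set S with Reg C ⊆ S ⊆ (Reg D)ᶜ.
  have key : ∃ S : Set (AddCircle L), IsPreconnected S ∧ R'.Reg C ⊆ S ∧ S ⊆ (R'.Reg D)ᶜ := by
    rcases hA with ⟨hAC, hAD⟩ | ⟨hAD, hAC⟩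
    · -- A ∈ Pre(C) \ Pre(D): Reg C ⊆ A ⊆ Reg⁻(D) ⊆ (Reg D)ᶜ
      obtain ⟨v, hv, rfl⟩ := hAC
      refine ⟨R'.arc v, arc_preconnected L _ _, ?_, ?_⟩
      · intro y hy
        exact hy.1 _ ⟨v, hv, rfl⟩
      · intro y hy hreg'
        exact hreg'.2 ⟨R'.arc v, ⟨⟨v, hv.1, rfl⟩, hAD⟩, hy⟩
    · -- A ∈ Pre(D) \ Pre(C): Reg C ⊆ Aᶜ ⊆ (Reg D)ᶜ
      obtain ⟨w, hw, rfl⟩ := hAD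
      refine ⟨(R'.arc w)ᶜ, compl_arc_preconnected R'.hL _ (R'.len_nonneg w hw.1)
        (R'.len_lt w hw.1), ?_, ?_⟩
      · intro y hy hyA
        exact hy.2 ⟨R'.arc w, ⟨⟨w, hw.1, rfl⟩, hAC⟩, hyA⟩
      · have hsub : R'.Reg D ⊆ R'.arc w := fun y hy => hy.1 _ ⟨w, hw, rfl⟩
        exact compl_subset_compl.mpr hsub
  obtain ⟨S, hSconn, hCS, hSD⟩ := key
  refine ⟨connectedComponentIn (R'.Reg D)ᶜ x, ⟨x, hSD (hCS hx), rfl⟩, ?_⟩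
  exact hCS.trans (hSconn.subset_connectedComponentIn (hCS hx) hSD)
end
end
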